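/- arXiv:2307.03431 — 4 statements merged into one kernel-verified Lean document; each statement's English description precedes it below -/
import Mathlib

section
/- For every d ≥ 3 there exist a strictly positive d×d density matrix ρ and d×d real symmetric matrices A, B such that no d×d real symmetric matrix C satisfies [[A,B],ρ] = ρ∘C, where [X,Y] := XY − YX. -/
open Matrix
open scoped ComplexOrder

noncomputable section

/-- The symmetrized (Jordan) product `A∘B := (AB+BA)/2`. -/
def jprod {d : ℕ} (A B : Matrix (Fin d) (Fin d) ℂ) : Matrix (Fin d) (Fin d) ℂ :=
  (1/2 : ℂ) • (A * B + B * A)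

/-- The commutator `[X,Y] := XY − YX`. -/
def mcomm {d : ℕ} (X Y : Matrix (Fin d) (Fin d) ℂ) : Matrix (Fin d) (Fin d) ℂ :=
  X * Y - Y * X

/-- A real symmetric matrix: a Hermitian matrix all of whose entries are real. -/
def IsRealSymm {d : ℕ} (A : Matrix (Fin d) (Fin d) ℂ) : Prop :=
  A.IsHermitian ∧ ∀ i j, (A i j).im = 0

/-!
Put a 3×3 example in the top-left corner. For `W = v v*` with `v = (1, i, 0)` and `ρ ∝ 1 + W`,
the identity commutes with everything, so `[[A,B],ρ] = ρ∘C` reduces to `[[A,B],W] = C + W∘C`.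
As `A`, `B`, `W` live in the corner, compressing this to the corner gives the same equation for
the 3×3 compression of `C`, which is again real symmetric; there its (0,2) and (1,2) entries
give incompatible values for `c₁₂`.
-/

namespace Matrix

variable {m n R : Type*} [DecidableEq n] [CommRing R] [StarRing R] {f : m → n}

section

variable [Fintype m]

/-- For injective `f`, `corner f X` has the entries `X i j` at `(f i, f j)` and zeros
elsewhere. -/
def corner (f : m → n) (X : Matrix m m R) : Matrix n n R :=
  (1 : Matrix n n R).submatrix id f * X * ((1 : Matrix n n R).submatrix id f)ᴴ

lemma IsHermitian.corner {X : Matrix m m R} (hX : X.IsHermitian) : (corner f X).IsHermitian :=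
  isHermitian_mul_mul_conjTranspose _ hX

lemma IsSymm.corner {X : Matrix m m R} (hX : X.IsSymm) : (corner f X).IsSymm := by
  simp only [IsSymm, Matrix.corner, transpose_mul, conjTranspose_submatrix, transpose_submatrix,
    conjTranspose_one, transpose_one, hX.eq, Matrix.mul_assoc]

lemma corner_sub (X Y : Matrix m m R) : corner f (X - Y) = corner f X - corner f Y := by
  simp only [corner, Matrix.mul_sub, Matrix.sub_mul]

lemma PosSemidef.corner [Fintype n] [PartialOrder R] [StarOrderedRing R] {X : Matrix m m R}
    (hX : X.PosSemidef) : (corner f X).PosSemidef :=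
  hX.mul_mul_conjTranspose_same _

end

variable [Fintype n]

lemma conjTranspose_one_submatrix_mul_mul (f : m → n) (D : Matrix n n R) :
    ((1 : Matrix n n R).submatrix id f)ᴴ * D * (1 : Matrix n n R).submatrix id f =
      D.submatrix f f := by
  ext i j
  simp [mul_apply, one_apply]

variable [DecidableEq m]

lemma conjTranspose_one_submatrix_mul_self (hf : Function.Injective f) :
    ((1 : Matrix n n R).submatrix id f)ᴴ * (1 : Matrix n n R).submatrix id f = 1 := by
  simpa [submatrix_one f hf] using conjTranspose_one_submatrix_mul_mul f (1 : Matrix n n R)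

lemma conjTranspose_one_submatrix_mul_self_assoc [Fintype m] (hf : Function.Injective f)
    {l : Type*} (Z : Matrix m l R) :
    ((1 : Matrix n n R).submatrix id f)ᴴ * ((1 : Matrix n n R).submatrix id f * Z) = Z := by
  rw [← Matrix.mul_assoc, conjTranspose_one_submatrix_mul_self hf, Matrix.one_mul]

variable [Fintype m]

lemma corner_mul_corner (hf : Function.Injective f) (X Y : Matrix m m R) :
    corner f X * corner f Y = corner f (X * Y) := by
  simp only [corner, Matrix.mul_assoc, conjTranspose_one_submatrix_mul_self_assoc hf]

lemma submatrix_corner_mul (hf : Function.Injective f) (X : Matrix m m R) (D : Matrix n n R) :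
    (corner f X * D).submatrix f f = X * D.submatrix f f := by
  simp only [corner, ← conjTranspose_one_submatrix_mul_mul, Matrix.mul_assoc,
    conjTranspose_one_submatrix_mul_self_assoc hf]

lemma submatrix_mul_corner (hf : Function.Injective f) (X : Matrix m m R) (D : Matrix n n R) :
    (D * corner f X).submatrix f f = D.submatrix f f * X := by
  simp only [corner, ← conjTranspose_one_submatrix_mul_mul, Matrix.mul_assoc,
    conjTranspose_one_submatrix_mul_self hf, Matrix.mul_one]

lemma submatrix_corner (hf : Function.Injective f) (X : Matrix m m R) :
    (corner f X).submatrix f f = X := by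
  simpa [submatrix_one f hf] using submatrix_corner_mul hf X 1

lemma trace_corner (hf : Function.Injective f) (X : Matrix m m R) :
    (corner f X).trace = X.trace := by
  rw [corner, trace_mul_cycle, conjTranspose_one_submatrix_mul_self hf, Matrix.one_mul]

end Matrix

open Matrix Complex

variable {d k : ℕ}

lemma isRealSymm_iff_isHermitian_and_isSymm {M : Matrix (Fin d) (Fin d) ℂ} :
    IsRealSymm M ↔ M.IsHermitian ∧ M.IsSymm := by
  refine ⟨fun ⟨hH, hre⟩ => ⟨hH, IsSymm.ext fun i j => ?_⟩,
    fun ⟨hH, hS⟩ => ⟨hH, fun i j => ?_⟩⟩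
  · rw [← hH.apply, star_def, conj_eq_iff_im.mpr (hre i j)]
  · rw [← conj_eq_iff_im, ← star_def, hH.apply, hS.apply]

lemma IsRealSymm.submatrix {C : Matrix (Fin d) (Fin d) ℂ} (hC : IsRealSymm C)
    (f : Fin k → Fin d) :
    IsRealSymm (C.submatrix f f) :=
  ⟨hC.1.submatrix f, fun i j => hC.2 (f i) (f j)⟩

lemma IsRealSymm.corner {X : Matrix (Fin k) (Fin k) ℂ} (hX : IsRealSymm X)
    (f : Fin k → Fin d) :
    IsRealSymm (corner f X) := by
  rw [isRealSymm_iff_isHermitian_and_isSymm] at hX ⊢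
  exact ⟨hX.1.corner, hX.2.corner⟩

lemma mcomm_smul_right (X Y : Matrix (Fin d) (Fin d) ℂ) (s : ℂ) :
    mcomm X (s • Y) = s • mcomm X Y := by
  rw [mcomm, mcomm, mul_smul_comm, smul_mul_assoc, smul_sub]

lemma mcomm_one_add_right (X Y : Matrix (Fin d) (Fin d) ℂ) : mcomm X (1 + Y) = mcomm X Y := by
  simp only [mcomm, Matrix.mul_add, Matrix.add_mul, Matrix.mul_one, Matrix.one_mul]
  abel

lemma jprod_smul_left (Y C : Matrix (Fin d) (Fin d) ℂ) (s : ℂ) :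
    jprod (s • Y) C = s • jprod Y C := by
  rw [jprod, jprod, smul_mul_assoc, mul_smul_comm, ← smul_add, smul_comm]

lemma jprod_one_add_left (Y C : Matrix (Fin d) (Fin d) ℂ) :
    jprod (1 + Y) C = C + jprod Y C := by
  simp only [jprod, Matrix.mul_add, Matrix.add_mul, Matrix.mul_one, Matrix.one_mul]
  module

section Corner

variable {f : Fin k → Fin d} (hf : Function.Injective f)
include hf

lemma mcomm_corner (X Y : Matrix (Fin k) (Fin k) ℂ) :
    mcomm (corner f X) (corner f Y) = corner f (mcomm X Y) := by
  rw [mcomm, mcomm, corner_mul_corner hf, corner_mul_corner hf, corner_sub]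

lemma submatrix_jprod_corner (X : Matrix (Fin k) (Fin k) ℂ) (C : Matrix (Fin d) (Fin d) ℂ) :
    (jprod (corner f X) C).submatrix f f = jprod X (C.submatrix f f) := by
  rw [jprod, jprod, ← submatrix_corner_mul hf, ← submatrix_mul_corner hf]
  rfl

end Corner

def A₃ : Matrix (Fin 3) (Fin 3) ℂ := !![0, 0, 1; 0, 0, 0; 1, 0, -1]
def B₃ : Matrix (Fin 3) (Fin 3) ℂ := !![0, 0, 1; 0, 0, -1; 1, -1, 0]
def W₃ : Matrix (Fin 3) (Fin 3) ℂ := !![1, -I, 0; I, 1, 0; 0, 0, 0]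

lemma isRealSymm_A₃ : IsRealSymm A₃ := by
  refine ⟨?_, ?_⟩
  · ext i j; fin_cases i <;> fin_cases j <;> simp [A₃]
  · intro i j; fin_cases i <;> fin_cases j <;> simp [A₃]

lemma isRealSymm_B₃ : IsRealSymm B₃ := by
  refine ⟨?_, ?_⟩
  · ext i j; fin_cases i <;> fin_cases j <;> simp [B₃]
  · intro i j; fin_cases i <;> fin_cases j <;> simp [B₃]

lemma W₃_eq_vecMulVec : W₃ = vecMulVec ![1, I, 0] (star ![1, I, 0]) := by
  ext i j; fin_cases i <;> fin_cases j <;> simp [W₃, vecMulVec_apply]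

lemma posSemidef_W₃ : W₃.PosSemidef := W₃_eq_vecMulVec ▸ posSemidef_vecMulVec_self_star _

lemma trace_W₃ : W₃.trace = 2 := by
  simp [trace_fin_three, W₃, one_add_one_eq_two]

lemma mcomm_mcomm_A₃_B₃_ne_add_jprod (c : Matrix (Fin 3) (Fin 3) ℂ) (hc : IsRealSymm c) :
    mcomm (mcomm A₃ B₃) W₃ ≠ c + jprod W₃ c := by
  intro h
  have h₀₂ : (1 : ℝ) = 2⁻¹ * (c 1 2).re := by
    simpa [mcomm, jprod, A₃, B₃, W₃, mul_apply, vecMul, dotProduct, Fin.sum_univ_three, hc.2]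
      using congrArg im (congrFun (congrFun h 0) 2)
  have h₁₂ : (1 : ℝ) = (c 1 2).re + 2⁻¹ * (c 1 2).re := by
    simpa [mcomm, jprod, A₃, B₃, W₃, mul_apply, vecMul, dotProduct, Fin.sum_univ_three, hc.2]
      using congrArg re (congrFun (congrFun h 1) 2)
  linarith

/-- For every `d ≥ 3` there are a strictly positive `d×d` density matrix
`ρ` and real symmetric `A`, `B` such that no real symmetric `C` satisfies
`[[A,B],ρ] = ρ∘C`. -/
theorem real_distribution_not_involutive (d : ℕ) (hd : 3 ≤ d) :
    ∃ ρ A B : Matrix (Fin d) (Fin d) ℂ,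
      ρ.PosDef ∧ ρ.trace = 1 ∧ IsRealSymm A ∧ IsRealSymm B ∧
      ¬ ∃ C : Matrix (Fin d) (Fin d) ℂ, IsRealSymm C ∧ mcomm (mcomm A B) ρ = jprod ρ C := by
  set f : Fin 3 → Fin d := Fin.castLE hd
  have hf : Function.Injective f := Fin.castLE_injective hd
  obtain ⟨r, hr, hrd⟩ : ∃ r : ℂ, 0 < r ∧ r * (d + 2) = 1 :=
    ⟨(((d : ℝ) + 2)⁻¹ : ℝ), zero_lt_real.mpr (by positivity), by push_cast; field_simp⟩
  refine ⟨r • (1 + corner f W₃), corner f A₃, corner f B₃,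
    (PosDef.one.add_posSemidef posSemidef_W₃.corner).smul hr, ?_,
    isRealSymm_A₃.corner f, isRealSymm_B₃.corner f, ?_⟩
  · rw [trace_smul, trace_add, trace_one, trace_corner hf, trace_W₃, Fintype.card_fin,
      smul_eq_mul, hrd]
  · rintro ⟨C, hC, h⟩
    rw [mcomm_smul_right, jprod_smul_left, mcomm_one_add_right, jprod_one_add_left,
      smul_right_injective _ hr.ne' |>.eq_iff, mcomm_corner hf, mcomm_corner hf] at h
    refine mcomm_mcomm_A₃_B₃_ne_add_jprod _ (hC.submatrix f) ?_
    simpa only [submatrix_corner hf, submatrix_add, Pi.add_apply, submatrix_jprod_corner hf]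
      using congrArg (·.submatrix f f) h
end
end

section
/- Let ρ be a d×d positive definite matrix with all real entries (hence real symmetric) and let A be a Hermitian d×d complex matrix. If ρ∘A has all real entries, then A has all real entries. Consequently, for a strictly positive density matrix ρ with real entries, the set of Hermitian L such that ρ∘L is a real matrix of trace 0 equals the set of real symmetric matrices A with Tr(ρA) = 0. -/
/-!
Complex conjugation fixes `ρ` and `ρ∘A`, so `M := A - Ā` (which is `2i Im A`) is a Hermitian
matrix with `ρM + Mρ = 0`. Then `tr(MρM) = tr(ρM²) = -tr(MρM)` vanishes; as `MρM = MᴴρM` is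
positive semidefinite it is zero, and positive definiteness of `ρ` forces `M = 0`.
-/

open Matrix
open scoped ComplexOrder

noncomputable section

namespace Matrix.PosDef

variable {n 𝕜 : Type*} [Fintype n] [RCLike 𝕜] {ρ M : Matrix n n 𝕜}

theorem eq_zero_of_conjTranspose_mul_mul_same_eq_zero (hρ : ρ.PosDef) (h : Mᴴ * ρ * M = 0) :
    M = 0 := by
  refine ext_iff_mulVec.mpr fun x ↦ ?_
  rw [zero_mulVec]
  by_contra hx
  have hpos := hρ.dotProduct_mulVec_pos hx
  rw [star_mulVec, ← dotProduct_mulVec, mulVec_mulVec, mulVec_mulVec, h,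
    zero_mulVec, dotProduct_zero] at hpos
  exact hpos.false

theorem eq_zero_of_mul_add_mul_eq_zero (hρ : ρ.PosDef) (hM : M.IsHermitian)
    (h : ρ * M + M * ρ = 0) : M = 0 := by
  have hρM : ρ * M = -(M * ρ) := eq_neg_of_add_eq_zero_left h
  have htrace : (M * ρ * M).trace = -(M * ρ * M).trace :=
    calc (M * ρ * M).trace = (ρ * M * M).trace := by rw [Matrix.mul_assoc, trace_mul_comm]
      _ = -(M * ρ * M).trace := by rw [hρM, Matrix.neg_mul, trace_neg]
  refine hρ.eq_zero_of_conjTranspose_mul_mul_same_eq_zero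
    ((hρ.posSemidef.conjTranspose_mul_mul_same M).trace_eq_zero_iff.mp ?_)
  rw [hM.eq]
  exact CharZero.eq_neg_self_iff.mp htrace

end Matrix.PosDef

theorem Matrix.map_conj_eq_self_iff {m n : Type*} {X : Matrix m n ℂ} :
    X.map (starRingEnd ℂ) = X ↔ ∀ i j, (X i j).im = 0 := by
  simp [← Matrix.ext_iff, Complex.conj_eq_iff_im]

section JordanProduct

variable {d : ℕ}

theorem jprod_map_conj (A B : Matrix (Fin d) (Fin d) ℂ) :
    (jprod A B).map (starRingEnd ℂ) = jprod (A.map (starRingEnd ℂ)) (B.map (starRingEnd ℂ)) := by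
  rw [jprod, jprod, Matrix.map_smul _ _ (fun _ ↦ by simp [map_ofNat]),
    Matrix.map_add _ (map_add _), Matrix.map_mul, Matrix.map_mul]

theorem jprod_sub_right (A B C : Matrix (Fin d) (Fin d) ℂ) :
    jprod A (B - C) = jprod A B - jprod A C := by
  simp only [jprod, Matrix.mul_sub, Matrix.sub_mul, ← smul_sub]
  abel_nf

theorem jprod_eq_zero_iff {A B : Matrix (Fin d) (Fin d) ℂ} :
    jprod A B = 0 ↔ A * B + B * A = 0 :=
  smul_eq_zero_iff_right (by norm_num)

theorem trace_jprod (A B : Matrix (Fin d) (Fin d) ℂ) : (jprod A B).trace = (A * B).trace := by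
  rw [jprod, trace_smul, trace_add, trace_mul_comm B A, smul_eq_mul]
  ring

theorem im_eq_zero_of_im_jprod_eq_zero {ρ A : Matrix (Fin d) (Fin d) ℂ} (hρ : ρ.PosDef)
    (hρr : ∀ i j, (ρ i j).im = 0) (hA : A.IsHermitian)
    (hρA : ∀ i j, ((jprod ρ A) i j).im = 0) : ∀ i j, (A i j).im = 0 := by
  rw [← map_conj_eq_self_iff] at hρr hρA ⊢
  set Ā := A.map (starRingEnd ℂ)
  have hconj : jprod ρ Ā = jprod ρ A := by rw [← hρA, jprod_map_conj, hρr]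
  have hanti : jprod ρ (A - Ā) = 0 := by rw [jprod_sub_right, hconj, sub_self]
  have hherm : (A - Ā).IsHermitian := hA.sub (hA.map _ fun _ ↦ rfl)
  exact (sub_eq_zero.mp (hρ.eq_zero_of_mul_add_mul_eq_zero hherm (jprod_eq_zero_iff.mp hanti))).symm

theorem im_jprod_eq_zero {ρ A : Matrix (Fin d) (Fin d) ℂ} (hρ : ∀ i j, (ρ i j).im = 0)
    (hA : ∀ i j, (A i j).im = 0) : ∀ i j, ((jprod ρ A) i j).im = 0 := by
  rw [← map_conj_eq_self_iff] at hρ hA ⊢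
  rw [jprod_map_conj, hρ, hA]

end JordanProduct

/-- If `ρ` is positive definite with real entries and `A` is Hermitian
with `ρ∘A` real, then `A` is real.  Consequently, for a strictly positive density `ρ`
with real entries, the Hermitian `L` with `ρ∘L` a real traceless matrix are exactly the
real symmetric `A` with `Tr(ρA) = 0`. -/
theorem real_jordan_real (d : ℕ) :
    (∀ ρ : Matrix (Fin d) (Fin d) ℂ, ρ.PosDef → (∀ i j, (ρ i j).im = 0) →
      ∀ A : Matrix (Fin d) (Fin d) ℂ, A.IsHermitian →
        (∀ i j, ((jprod ρ A) i j).im = 0) → ∀ i j, (A i j).im = 0) ∧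
    (∀ ρ : Matrix (Fin d) (Fin d) ℂ, ρ.PosDef → (∀ i j, (ρ i j).im = 0) → ρ.trace = 1 →
      {L : Matrix (Fin d) (Fin d) ℂ | L.IsHermitian ∧
          (∀ i j, ((jprod ρ L) i j).im = 0) ∧ (jprod ρ L).trace = 0} =
        {A : Matrix (Fin d) (Fin d) ℂ | IsRealSymm A ∧ (ρ * A).trace = 0}) := by
  refine ⟨fun ρ hρ hρr A hA ↦ im_eq_zero_of_im_jprod_eq_zero hρ hρr hA, ?_⟩
  intro ρ hρ hρr _
  ext L
  simp only [IsRealSymm, trace_jprod]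
  constructor
  · rintro ⟨hL, hρL, htr⟩
    exact ⟨⟨hL, im_eq_zero_of_im_jprod_eq_zero hρ hρr hL hρL⟩, htr⟩
  · rintro ⟨⟨hL, hLr⟩, htr⟩
    exact ⟨hL, im_jprod_eq_zero hρr hLr, htr⟩
end
end

section
/- Let F¹, …, Fⁿ be mutually commuting Hermitian d×d complex matrices, P a positive definite Hermitian d×d matrix, Ξ ⊆ ℝⁿ open, and θ = (θ₁,…,θₙ) : Ξ → ℝⁿ, ψ : Ξ → ℝ differentiable. Define h(ξ) := Σⱼ θⱼ(ξ)Fʲ − ψ(ξ)I and ρ_ξ := exp(h(ξ)/2) · P · exp(h(ξ)/2). Then for each i and each ξ ∈ Ξ, ∂ρ_ξ/∂ξⁱ = ρ_ξ ∘ Lᵢ(ξ), where Lᵢ(ξ) := Σⱼ (∂θⱼ/∂ξⁱ)(ξ) Fʲ − (∂ψ/∂ξⁱ)(ξ) I. That is, the SLDs of a quasi-classical exponential family are Lᵢ = Σⱼ(∂ᵢθⱼ)(Fʲ − terms proportional to I). -/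
/-!
Since the `Fʲ` commute, the exponents `h(ξ)` at all points commute with one another and with
`Lᵢ(ξ)`. Hence `exp(h(ξ + t eᵢ)/2) = exp(h(ξ)/2) exp((h(ξ + t eᵢ) - h(ξ))/2)`, and as `exp` has
derivative the identity at `0`, the derivative of `exp(h/2)` along `ξⁱ` is `exp(h/2) Lᵢ/2`.
The product rule then gives `∂ᵢρ = ½ (exp(h/2) Lᵢ P exp(h/2) + exp(h/2) P exp(h/2) Lᵢ)`, and
moving `Lᵢ` past `exp(h/2)` in the first term turns this into `ρ ∘ Lᵢ`.
-/

open Matrix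
open scoped ComplexOrder

noncomputable section

/-- The exponent `h(ξ) := Σⱼ θⱼ(ξ)Fʲ − ψ(ξ)I`. -/
def qceExponent {d n : ℕ} (F : Fin n → Matrix (Fin d) (Fin d) ℂ)
    (θ : (Fin n → ℝ) → Fin n → ℝ) (ψ : (Fin n → ℝ) → ℝ) (ξ : Fin n → ℝ) :
    Matrix (Fin d) (Fin d) ℂ :=
  (∑ j, θ ξ j • F j) - ψ ξ • (1 : Matrix (Fin d) (Fin d) ℂ)

/-- The quasi-classical exponential family `ρ_ξ := exp(h(ξ)/2) P exp(h(ξ)/2)`. -/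
def qceState {d n : ℕ} (F : Fin n → Matrix (Fin d) (Fin d) ℂ)
    (P : Matrix (Fin d) (Fin d) ℂ) (θ : (Fin n → ℝ) → Fin n → ℝ)
    (ψ : (Fin n → ℝ) → ℝ) (ξ : Fin n → ℝ) : Matrix (Fin d) (Fin d) ℂ :=
  NormedSpace.exp (((1:ℝ)/2) • qceExponent F θ ψ ξ) * P *
    NormedSpace.exp (((1:ℝ)/2) • qceExponent F θ ψ ξ)

open NormedSpace

theorem hasDerivAt_exp_of_commute {𝔸 : Type*} [NormedRing 𝔸] [NormedAlgebra ℝ 𝔸]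
    [CompleteSpace 𝔸] {f : ℝ → 𝔸} {f' : 𝔸} {t : ℝ} (hf : HasDerivAt f f' t)
    (hcomm : ∀ s, Commute (f t) (f s)) :
    HasDerivAt (fun s => exp (f s)) (exp (f t) * f') t := by
  let : NormedAlgebra ℚ 𝔸 := NormedAlgebra.restrictScalars ℚ ℝ 𝔸
  have hsplit : (fun s => exp (f s)) = fun s => exp (f t) * exp (f s - f t) := by
    funext s
    rw [← exp_add_of_commute ((hcomm s).sub_right (Commute.refl _)), add_sub_cancel]
  have hincrement : HasDerivAt (fun s => exp (f s - f t)) f' t := by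
    have hexp : HasFDerivAt exp (1 : 𝔸 →L[ℝ] 𝔸) (f t - f t) := by
      rw [sub_self]
      exact hasFDerivAt_exp_zero
    exact hexp.comp_hasDerivAt t (hf.sub_const (f t))
  rw [hsplit]
  exact hincrement.const_mul (exp (f t))

theorem commute_sum_smul_sub_smul_one {A ι : Type*} [Ring A] [Algebra ℝ A] [Fintype ι]
    {F : ι → A} (hF : ∀ j k, Commute (F j) (F k)) (c c' : ι → ℝ) (s s' : ℝ) :
    Commute ((∑ j, c j • F j) - s • 1) ((∑ j, c' j • F j) - s' • 1) := by
  have hFj : ∀ j, Commute (F j) ((∑ k, c' k • F k) - s' • 1) := fun j =>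
    (Commute.sum_right _ _ _ fun k _ => (hF j k).smul_right _).sub_right
      ((Commute.one_right _).smul_right _)
  exact (Commute.sum_left _ _ _ fun j _ => (hFj j).smul_left _).sub_left
    ((Commute.one_left _).smul_left _)

theorem commute_qceExponent {d n : ℕ} {F : Fin n → Matrix (Fin d) (Fin d) ℂ}
    (hF : ∀ j k, Commute (F j) (F k)) (θ : (Fin n → ℝ) → Fin n → ℝ) (ψ : (Fin n → ℝ) → ℝ)
    (ξ ξ' : Fin n → ℝ) : Commute (qceExponent F θ ψ ξ) (qceExponent F θ ψ ξ') :=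
  commute_sum_smul_sub_smul_one hF _ _ _ _

theorem jprod_conj_of_commute {d : ℕ} {E P L : Matrix (Fin d) (Fin d) ℂ} (hLE : Commute L E) :
    jprod (E * P * E) L = E * ((1 : ℝ) / 2) • L * P * E + E * P * (E * ((1 : ℝ) / 2) • L) := by
  have hL : L * (E * P * E) = E * L * P * E := by rw [← mul_assoc, ← mul_assoc, hLE.eq]
  have hhalf : ((1 : ℝ) / 2) • L = ((1 : ℂ) / 2) • L := by
    rw [← Complex.coe_smul]; norm_num
  rw [jprod, hL, hhalf]
  simp only [mul_smul_comm, smul_mul_assoc, mul_assoc]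
  module

section LinftyOp

-- Matrices have no canonical norm; any choice works, since the theorem is stated entrywise.
attribute [local instance] Matrix.linftyOpNormedAddCommGroup Matrix.linftyOpNormedSpace
  Matrix.linftyOpNormedRing Matrix.linftyOpNormedAlgebra

theorem HasDerivAt.matrix_apply {m n : Type*} [Fintype m] [Fintype n] {f : ℝ → Matrix m n ℂ}
    {f' : Matrix m n ℂ} {t : ℝ} (hf : HasDerivAt f f' t) (a : m) (b : n) :
    HasDerivAt (fun s => f s a b) (f' a b) t :=
  (Matrix.entryLinearMap ℝ ℂ a b).toContinuousLinearMap.hasFDerivAt.comp_hasDerivAt t hf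

section Update

variable {d n : ℕ} {F : Fin n → Matrix (Fin d) (Fin d) ℂ} {θ : (Fin n → ℝ) → Fin n → ℝ}
  {ψ : (Fin n → ℝ) → ℝ} {ξ : Fin n → ℝ} {i : Fin n} {θ' : Fin n → ℝ} {ψ' : ℝ}

theorem hasDerivAt_qceExponent_update
    (hθ : ∀ j, HasDerivAt (fun t => θ (Function.update ξ i t) j) (θ' j) (ξ i))
    (hψ : HasDerivAt (fun t => ψ (Function.update ξ i t)) ψ' (ξ i)) :
    HasDerivAt (fun t => qceExponent F θ ψ (Function.update ξ i t))
      ((∑ j, θ' j • F j) - ψ' • 1) (ξ i) :=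
  (HasDerivAt.fun_sum fun j _ => (hθ j).smul_const (F j)).sub (hψ.smul_const 1)

theorem hasDerivAt_exp_half_qceExponent_update (hF : ∀ j k, Commute (F j) (F k))
    (hθ : ∀ j, HasDerivAt (fun t => θ (Function.update ξ i t) j) (θ' j) (ξ i))
    (hψ : HasDerivAt (fun t => ψ (Function.update ξ i t)) ψ' (ξ i)) :
    HasDerivAt (fun t => exp (((1 : ℝ) / 2) • qceExponent F θ ψ (Function.update ξ i t)))
      (exp (((1 : ℝ) / 2) • qceExponent F θ ψ ξ) * ((1 : ℝ) / 2) • ((∑ j, θ' j • F j) - ψ' • 1))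
      (ξ i) := by
  have hhalf : HasDerivAt (fun t => ((1 : ℝ) / 2) • qceExponent F θ ψ (Function.update ξ i t))
      (((1 : ℝ) / 2) • ((∑ j, θ' j • F j) - ψ' • 1)) (ξ i) :=
    (hasDerivAt_qceExponent_update (F := F) hθ hψ).const_smul ((1 : ℝ) / 2)
  have h := hasDerivAt_exp_of_commute hhalf fun s =>
    ((commute_qceExponent hF θ ψ _ _).smul_left _).smul_right _
  rwa [Function.update_eq_self] at h

end Update

theorem qce_sld_general (d n : ℕ) (F : Fin n → Matrix (Fin d) (Fin d) ℂ)
    (hcomm : ∀ j k, F j * F k = F k * F j)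
    (P : Matrix (Fin d) (Fin d) ℂ)
    (Ξ : Set (Fin n → ℝ))
    (θ : (Fin n → ℝ) → Fin n → ℝ) (ψ : (Fin n → ℝ) → ℝ)
    (pθ : (Fin n → ℝ) → Fin n → Fin n → ℝ) (pψ : (Fin n → ℝ) → Fin n → ℝ)
    (hθ : ∀ ξ ∈ Ξ, ∀ i j, HasDerivAt (fun t => θ (Function.update ξ i t) j)
      (pθ ξ i j) (ξ i))
    (hψ : ∀ ξ ∈ Ξ, ∀ i, HasDerivAt (fun t => ψ (Function.update ξ i t))
      (pψ ξ i) (ξ i)) :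
    ∀ ξ ∈ Ξ, ∀ i, ∀ a b : Fin d,
      HasDerivAt (fun t => qceState F P θ ψ (Function.update ξ i t) a b)
        ((jprod (qceState F P θ ψ ξ)
          ((∑ j, pθ ξ i j • F j) - pψ ξ i • (1 : Matrix (Fin d) (Fin d) ℂ))) a b)
        (ξ i) := by
  intro ξ hξ i a b
  have hE := hasDerivAt_exp_half_qceExponent_update hcomm (hθ ξ hξ i) (hψ ξ hξ i)
  have hLE : Commute ((∑ j, pθ ξ i j • F j) - pψ ξ i • (1 : Matrix (Fin d) (Fin d) ℂ))
      (exp (((1 : ℝ) / 2) • qceExponent F θ ψ ξ)) :=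
    ((commute_sum_smul_sub_smul_one hcomm _ _ _ _).smul_right _).exp_right
  have hρ := (hE.mul_const P).fun_mul hE
  rw [Function.update_eq_self, ← jprod_conj_of_commute hLE] at hρ
  exact hρ.matrix_apply a b

/-- The SLDs of a quasi-classical exponential family are
`Lᵢ(ξ) = Σⱼ (∂ᵢθⱼ)(ξ)Fʲ − (∂ᵢψ)(ξ)I`, i.e. `∂ᵢρ_ξ = ρ_ξ ∘ Lᵢ(ξ)`. -/
theorem qce_sld (d n : ℕ) (F : Fin n → Matrix (Fin d) (Fin d) ℂ)
    (hF : ∀ j, (F j).IsHermitian) (hcomm : ∀ j k, F j * F k = F k * F j)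
    (P : Matrix (Fin d) (Fin d) ℂ) (hP : P.PosDef)
    (Ξ : Set (Fin n → ℝ)) (hΞ : IsOpen Ξ)
    (θ : (Fin n → ℝ) → Fin n → ℝ) (ψ : (Fin n → ℝ) → ℝ)
    (pθ : (Fin n → ℝ) → Fin n → Fin n → ℝ) (pψ : (Fin n → ℝ) → Fin n → ℝ)
    (hθ : ∀ ξ ∈ Ξ, ∀ i j, HasDerivAt (fun t => θ (Function.update ξ i t) j)
      (pθ ξ i j) (ξ i))
    (hψ : ∀ ξ ∈ Ξ, ∀ i, HasDerivAt (fun t => ψ (Function.update ξ i t))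
      (pψ ξ i) (ξ i)) :
    ∀ ξ ∈ Ξ, ∀ i, ∀ a b : Fin d,
      HasDerivAt (fun t => qceState F P θ ψ (Function.update ξ i t) a b)
        ((jprod (qceState F P θ ψ ξ)
          ((∑ j, pθ ξ i j • F j) - pψ ξ i • (1 : Matrix (Fin d) (Fin d) ℂ))) a b)
        (ξ i) :=
  qce_sld_general d n F hcomm P Ξ θ ψ pθ pψ hθ hψ

end LinftyOp
end
end

section
/- Let (ρ_ξ)_{ξ∈Ξ} be a smooth model of strictly positive d×d density matrices with SLDs L_{i,ξ} and invertible SLD Fisher matrix G(ξ). Suppose that for every positive definite matrix W ∈ ℝ^{n×n} there exists a finite-outcome estimator Π_W, locally unbiased at every ξ ∈ Ξ, such that for every ξ ∈ Ξ and every finite-outcome estimator Π' locally unbiased at ξ, tr(W·V_ξ(Π_W)) ≤ tr(W·V_ξ(Π')) (i.e. Π_W is W-efficient). Then for every u ∈ ℝⁿ there exists a family (Π_ε)_{ε>0} of finite-outcome estimators, each locally unbiased at every ξ ∈ Ξ, such that for every ξ ∈ Ξ and every finite-outcome estimator Π' locally unbiased at ξ, limsup_{ε↓0} uᵀV_ξ(Π_ε)u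 ≤ uᵀV_ξ(Π')u (i.e. (Π_ε) is a uuᵀ-efficient filtration). -/
/-! Take `Π_ε` to be `(uuᵀ + εI)`-efficient. Against any `Π'` locally unbiased at `ξ` this gives
`uᵀV(Π_ε)u + ε tr V(Π_ε) ≤ uᵀV(Π')u + ε tr V(Π')`. Variance matrices are positive semidefinite,
so `0 ≤ uᵀV(Π_ε)u ≤ uᵀV(Π')u + ε tr V(Π')`, and the right side tends to `uᵀV(Π')u` as `ε ↓ 0`. -/

open Matrix
open scoped ComplexOrder

noncomputable section

/-- A POVM on a finite set `Ω`: positive semidefinite matrices summing to `I`. -/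
def IsPOVM {d : ℕ} {Ω : Type} [Fintype Ω] (π : Ω → Matrix (Fin d) (Fin d) ℂ) : Prop :=
  (∀ ω, (π ω).PosSemidef) ∧ ∑ ω, π ω = 1

/-- Local unbiasedness of the estimator `(π, f)` at `ρ` w.r.t. SLDs `L` and values `c`. -/
def LocUnbiased {d n : ℕ} (ρ : Matrix (Fin d) (Fin d) ℂ)
    (L : Fin n → Matrix (Fin d) (Fin d) ℂ) (c : Fin n → ℝ)
    {Ω : Type} [Fintype Ω] (π : Ω → Matrix (Fin d) (Fin d) ℂ)
    (f : Ω → Fin n → ℝ) : Prop :=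
  ∀ i, Matrix.trace (ρ * ∑ ω, f ω i • π ω) = (c i : ℂ) ∧
    ∀ j, (Matrix.trace (ρ * L j * ∑ ω, f ω i • π ω)).re =
      if i = j then (1 : ℝ) else 0

/-- The variance matrix `V_ξ(Π)` of the estimator `(π, f)` at `ρ` with values `c`. -/
def varMat {d n : ℕ} (ρ : Matrix (Fin d) (Fin d) ℂ) (c : Fin n → ℝ)
    {Ω : Type} [Fintype Ω] (π : Ω → Matrix (Fin d) (Fin d) ℂ)
    (f : Ω → Fin n → ℝ) : Matrix (Fin n) (Fin n) ℝ :=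
  Matrix.of fun i j =>
    ∑ ω, (f ω i - c i) * (f ω j - c j) * (Matrix.trace (ρ * π ω)).re

namespace Matrix

variable {n : Type*} [Fintype n]

open scoped MatrixOrder in
lemma PosSemidef.trace_mul_nonneg {𝕜 : Type*} [RCLike 𝕜] {A B : Matrix n n 𝕜}
    (hA : A.PosSemidef) (hB : B.PosSemidef) : 0 ≤ (A * B).trace := by
  classical
  obtain ⟨C, rfl⟩ := CStarAlgebra.nonneg_iff_eq_star_mul_self.mp hB.nonneg
  rw [star_eq_conjTranspose, ← Matrix.mul_assoc, trace_mul_cycle]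
  exact (hA.mul_mul_conjTranspose_same C).trace_nonneg

lemma sum_sum_mul_mul_eq_dotProduct_mulVec {R : Type*} [CommSemiring R] (u : n → R)
    (V : Matrix n n R) : ∑ i, ∑ j, u i * V i j * u j = u ⬝ᵥ V *ᵥ u := by
  simp only [dotProduct, mulVec, Finset.mul_sum, mul_assoc]

variable [DecidableEq n]

lemma posDef_vecMulVec_add_smul_one (u : n → ℝ) {ε : ℝ} (hε : 0 < ε) :
    (vecMulVec u u + ε • (1 : Matrix n n ℝ)).PosDef := by
  simpa using PosDef.posSemidef_add (posSemidef_vecMulVec_self_star u) (PosDef.one.smul hε)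

lemma trace_vecMulVec_add_smul_one_mul (u : n → ℝ) (ε : ℝ) (V : Matrix n n ℝ) :
    ((vecMulVec u u + ε • 1) * V).trace = u ⬝ᵥ V *ᵥ u + ε * V.trace := by
  rw [add_mul, trace_add, vecMulVec_mul, trace_vecMulVec, smul_mul, one_mul, trace_smul,
    smul_eq_mul, dotProduct_mulVec, dotProduct_comm]

lemma dotProduct_mulVec_le_of_trace_vecMulVec_add_smul_one_mul_le {u : n → ℝ} {ε : ℝ}
    (hε : 0 ≤ ε) {V V' : Matrix n n ℝ} (hV : V.PosSemidef)
    (h : ((vecMulVec u u + ε • 1) * V).trace ≤ ((vecMulVec u u + ε • 1) * V').trace) :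
    u ⬝ᵥ V *ᵥ u ≤ u ⬝ᵥ V' *ᵥ u + ε * V'.trace := by
  rw [trace_vecMulVec_add_smul_one_mul, trace_vecMulVec_add_smul_one_mul] at h
  nlinarith [hV.trace_nonneg]

end Matrix

lemma varMat_eq_sum_smul_vecMulVec {d n : ℕ} (ρ : Matrix (Fin d) (Fin d) ℂ) (c : Fin n → ℝ)
    {Ω : Type} [Fintype Ω] (π : Ω → Matrix (Fin d) (Fin d) ℂ) (f : Ω → Fin n → ℝ) :
    varMat ρ c π f = ∑ ω, (ρ * π ω).trace.re • vecMulVec (f ω - c) (f ω - c) := by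
  ext i j
  simp [varMat, Matrix.sum_apply, vecMulVec_apply, mul_comm]

lemma varMat_posSemidef {d n : ℕ} {ρ : Matrix (Fin d) (Fin d) ℂ} (hρ : ρ.PosSemidef)
    (c : Fin n → ℝ) {Ω : Type} [Fintype Ω] {π : Ω → Matrix (Fin d) (Fin d) ℂ}
    (hπ : ∀ ω, (π ω).PosSemidef) (f : Ω → Fin n → ℝ) : (varMat ρ c π f).PosSemidef := by
  rw [varMat_eq_sum_smul_vecMulVec]
  refine posSemidef_sum _ fun ω _ => ?_
  have hp : 0 ≤ (ρ * π ω).trace.re := (Complex.nonneg_iff.mp (hρ.trace_mul_nonneg (hπ ω))).1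
  simpa using (posSemidef_vecMulVec_self_star (f ω - c)).smul hp

lemma Filter.limsup_le_of_eventually_le_of_tendsto {α : Type*} {l : Filter α} [l.NeBot]
    {g h : α → ℝ} {b T : ℝ} (hb : ∀ᶠ x in l, b ≤ g x) (hgh : g ≤ᶠ[l] h)
    (hh : Tendsto h l (nhds T)) : limsup g l ≤ T :=
  (limsup_le_limsup hgh (isCoboundedUnder_le_of_eventually_le l hb)
    hh.isBoundedUnder_le).trans_eq hh.limsup_eq

theorem W_efficient_implies_filtration_general (d n : ℕ)
    (Ξ : Set (Fin n → ℝ))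
    (ρ : (Fin n → ℝ) → Matrix (Fin d) (Fin d) ℂ)
    (hρ : ∀ ξ ∈ Ξ, (ρ ξ).PosDef ∧ (ρ ξ).trace = 1)
    (L : (Fin n → ℝ) → Fin n → Matrix (Fin d) (Fin d) ℂ)
    (hWeff : ∀ W : Matrix (Fin n) (Fin n) ℝ, W.PosDef →
      ∃ (Ω : Type) (_ : Fintype Ω)
        (π : Ω → Matrix (Fin d) (Fin d) ℂ) (f : Ω → Fin n → ℝ),
        IsPOVM π ∧ (∀ ξ ∈ Ξ, LocUnbiased (ρ ξ) (L ξ) ξ π f) ∧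
        (∀ ξ ∈ Ξ, ∀ (Ω' : Type) (_ : Fintype Ω')
          (π' : Ω' → Matrix (Fin d) (Fin d) ℂ) (f' : Ω' → Fin n → ℝ),
          IsPOVM π' → LocUnbiased (ρ ξ) (L ξ) ξ π' f' →
          Matrix.trace (W * varMat (ρ ξ) ξ π f) ≤
            Matrix.trace (W * varMat (ρ ξ) ξ π' f'))) :
    ∀ u : Fin n → ℝ,
      ∃ (Ω : ℝ → Type) (_ : ∀ ε, Fintype (Ω ε))
        (π : ∀ ε, Ω ε → Matrix (Fin d) (Fin d) ℂ) (f : ∀ ε, Ω ε → Fin n → ℝ),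
        (∀ ε : ℝ, 0 < ε → IsPOVM (π ε)) ∧
        (∀ ε : ℝ, 0 < ε → ∀ ξ ∈ Ξ, LocUnbiased (ρ ξ) (L ξ) ξ (π ε) (f ε)) ∧
        (∀ ξ ∈ Ξ, ∀ (Ω' : Type) (_ : Fintype Ω')
          (π' : Ω' → Matrix (Fin d) (Fin d) ℂ) (f' : Ω' → Fin n → ℝ),
          IsPOVM π' → LocUnbiased (ρ ξ) (L ξ) ξ π' f' →
          Filter.limsup
            (fun ε => ∑ i, ∑ j, u i * varMat (ρ ξ) ξ (π ε) (f ε) i j * u j)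
            (nhdsWithin 0 (Set.Ioi 0)) ≤
          ∑ i, ∑ j, u i * varMat (ρ ξ) ξ π' f' i j * u j) := by
  intro u
  -- The weight for `ε ≤ 0` is irrelevant; it only has to be positive definite.
  let W : ℝ → Matrix (Fin n) (Fin n) ℝ := fun ε => if 0 < ε then vecMulVec u u + ε • 1 else 1
  have hW : ∀ ε, (W ε).PosDef := fun ε => by
    by_cases hε : 0 < ε
    · simpa [W, hε] using posDef_vecMulVec_add_smul_one u hε
    · simpa [W, hε] using PosDef.one
  choose Ω _ π f hπ hunb heff using fun ε => hWeff (W ε) (hW ε)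
  refine ⟨Ω, _, π, f, fun ε _ => hπ ε, fun ε _ => hunb ε, ?_⟩
  intro ξ hξ Ω' _ π' f' hπ' hunb'
  have hV : ∀ ε, (varMat (ρ ξ) ξ (π ε) (f ε)).PosSemidef := fun ε =>
    varMat_posSemidef (hρ ξ hξ).1.posSemidef ξ (hπ ε).1 (f ε)
  set V' := varMat (ρ ξ) ξ π' f'
  simp only [sum_sum_mul_mul_eq_dotProduct_mulVec]
  refine Filter.limsup_le_of_eventually_le_of_tendsto (b := 0)
    (h := fun ε => u ⬝ᵥ V' *ᵥ u + ε * V'.trace) (.of_forall fun ε => ?_) ?_ ?_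
  · simpa using (hV ε).dotProduct_mulVec_nonneg u
  · filter_upwards [self_mem_nhdsWithin] with ε (hε : 0 < ε)
    have hWε := heff ε ξ hξ Ω' _ π' f' hπ' hunb'
    simp only [W, if_pos hε] at hWε
    exact dotProduct_mulVec_le_of_trace_vecMulVec_add_smul_one_mul_le hε.le (hV ε) hWε
  · exact tendsto_nhdsWithin_of_tendsto_nhds (Continuous.tendsto' (by fun_prop) _ _ (by simp))

/-- If `W`-efficient estimators exist for every positive definite
weight `W`, then for every `u ∈ ℝⁿ` there is a `uuᵀ`-efficient filtration. -/
theorem W_efficient_implies_filtration (d n : ℕ)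
    (Ξ : Set (Fin n → ℝ)) (hΞopen : IsOpen Ξ)
    (ρ : (Fin n → ℝ) → Matrix (Fin d) (Fin d) ℂ)
    (hρ : ∀ ξ ∈ Ξ, (ρ ξ).PosDef ∧ (ρ ξ).trace = 1)
    (hinj : Set.InjOn ρ Ξ)
    (L : (Fin n → ℝ) → Fin n → Matrix (Fin d) (Fin d) ℂ)
    (hLherm : ∀ ξ ∈ Ξ, ∀ i, (L ξ i).IsHermitian)
    (hLsld : ∀ ξ ∈ Ξ, ∀ i, ∀ a b : Fin d,
      HasDerivAt (fun t => ρ (Function.update ξ i t) a b)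
        ((jprod (ρ ξ) (L ξ i)) a b) (ξ i))
    (hWeff : ∀ W : Matrix (Fin n) (Fin n) ℝ, W.PosDef →
      ∃ (Ω : Type) (_ : Fintype Ω)
        (π : Ω → Matrix (Fin d) (Fin d) ℂ) (f : Ω → Fin n → ℝ),
        IsPOVM π ∧ (∀ ξ ∈ Ξ, LocUnbiased (ρ ξ) (L ξ) ξ π f) ∧
        (∀ ξ ∈ Ξ, ∀ (Ω' : Type) (_ : Fintype Ω')
          (π' : Ω' → Matrix (Fin d) (Fin d) ℂ) (f' : Ω' → Fin n → ℝ),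
          IsPOVM π' → LocUnbiased (ρ ξ) (L ξ) ξ π' f' →
          Matrix.trace (W * varMat (ρ ξ) ξ π f) ≤
            Matrix.trace (W * varMat (ρ ξ) ξ π' f'))) :
    ∀ u : Fin n → ℝ,
      ∃ (Ω : ℝ → Type) (_ : ∀ ε, Fintype (Ω ε))
        (π : ∀ ε, Ω ε → Matrix (Fin d) (Fin d) ℂ) (f : ∀ ε, Ω ε → Fin n → ℝ),
        (∀ ε : ℝ, 0 < ε → IsPOVM (π ε)) ∧
        (∀ ε : ℝ, 0 < ε → ∀ ξ ∈ Ξ, LocUnbiased (ρ ξ) (L ξ) ξ (π ε) (f ε)) ∧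
        (∀ ξ ∈ Ξ, ∀ (Ω' : Type) (_ : Fintype Ω')
          (π' : Ω' → Matrix (Fin d) (Fin d) ℂ) (f' : Ω' → Fin n → ℝ),
          IsPOVM π' → LocUnbiased (ρ ξ) (L ξ) ξ π' f' →
          Filter.limsup
            (fun ε => ∑ i, ∑ j, u i * varMat (ρ ξ) ξ (π ε) (f ε) i j * u j)
            (nhdsWithin 0 (Set.Ioi 0)) ≤
          ∑ i, ∑ j, u i * varMat (ρ ξ) ξ π' f' i j * u j) :=
  W_efficient_implies_filtration_general d n Ξ ρ hρ L hWeff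
end
end
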